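/- arXiv:2503.19562 — 4 statements merged into one kernel-verified Lean document; each statement's English description precedes it below -/
import Mathlib

section
/- Let n ≥ 1, let λ = (λ₁,…,λₙ) ∈ ℂⁿ satisfy |λᵢ| < 1 for every i, and let c ∈ ℂ with |c| ≥ 1 and c ≠ 1. If f : ℂⁿ → ℂ is continuous and satisfies f(d_λ(z)) = c·f(z) for all z ∈ ℂⁿ, then f is identically zero. -/
/-!
Iterating the functional equation gives `f (λᵏ z) = cᵏ f z`. Since `|λᵢ| < 1`, the points `λᵏ z`
tend to `0`, so by continuity `cᵏ f z → f 0`, and `f 0 = c f 0` forces `f 0 = 0` as `c ≠ 1`.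
But `|cᵏ f z| ≥ |f z|` because `|c| ≥ 1`, hence `f z = 0`.
-/

open Filter Topology

theorem eq_zero_of_map_eq_smul_of_tendsto_iterate {X 𝕜 E : Type*} [TopologicalSpace X]
    [NormedDivisionRing 𝕜] [NormedAddCommGroup E] [Module 𝕜 E] [NormSMulClass 𝕜 E]
    {T : X → X} {f : X → E} {c : 𝕜} {x₀ x : X}
    (hfT : ∀ y, f (T y) = c • f y) (hc : 1 ≤ ‖c‖) (hf : ContinuousAt f x₀) (hx₀ : f x₀ = 0)
    (hT : Tendsto (fun k => T^[k] x) atTop (𝓝 x₀)) : f x = 0 := by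
  have hsemiconj : Function.Semiconj f T (c • ·) := hfT
  have hiter (k : ℕ) : f (T^[k] x) = c ^ k • f x := by
    simpa only [smul_iterate] using hsemiconj.iterate_right k x
  have hlim : Tendsto (fun k : ℕ => ‖c‖ ^ k * ‖f x‖) atTop (𝓝 0) := by
    simpa [hiter, hx₀, norm_smul] using (hf.tendsto.comp hT).norm
  have hle : ‖f x‖ ≤ 0 :=
    ge_of_tendsto' hlim fun k => le_mul_of_one_le_left (norm_nonneg _) (one_le_pow₀ hc)
  exact norm_le_zero_iff.mp hle

theorem tendsto_pow_smul_nhds_zero_of_norm_lt_one {R M : Type*} [SeminormedRing R]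
    [TopologicalSpace M] [AddCommMonoid M] [Module R M] [ContinuousSMul R M] {a : R}
    (ha : ‖a‖ < 1) (z : M) : Tendsto (fun k : ℕ => a ^ k • z) atTop (𝓝 0) := by
  simpa using (tendsto_pow_atTop_nhds_zero_of_norm_lt_one ha).smul_const z

theorem stmt_4_general (n : ℕ) (lam : Fin n → ℂ)
    (hlam : ∀ i, ‖lam i‖ < 1)
    (c : ℂ) (hc1 : 1 ≤ ‖c‖) (hc2 : c ≠ 1)
    (f : (Fin n → ℂ) → ℂ) (hf : Continuous f)
    (hinv : ∀ z, f (fun i => lam i * z i) = c * f z) :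
    ∀ z, f z = 0 := by
  have hf0 : f 0 = 0 := by
    have h : f 0 = c * f 0 := by
      convert hinv 0 using 2
      ext i
      simp
    have h' : (c - 1) * f 0 = 0 := by linear_combination -h
    exact (mul_eq_zero.mp h').resolve_left (sub_ne_zero.mpr hc2)
  have hlam' : ‖lam‖ < 1 := (pi_norm_lt_iff one_pos).mpr hlam
  intro z
  refine eq_zero_of_map_eq_smul_of_tendsto_iterate (T := (lam • ·)) hinv hc1 hf.continuousAt hf0 ?_
  simpa only [smul_iterate] using tendsto_pow_smul_nhds_zero_of_norm_lt_one hlam' z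

/-- If `f : ℂⁿ → ℂ` is continuous, `|λ_i| < 1` for all `i`, `|c| ≥ 1`, `c ≠ 1`, and
`f ∘ d_λ = c·f`, then `f ≡ 0`. -/
theorem stmt_4 (n : ℕ) (hn : 1 ≤ n) (lam : Fin n → ℂ)
    (hlam : ∀ i, ‖lam i‖ < 1)
    (c : ℂ) (hc1 : 1 ≤ ‖c‖) (hc2 : c ≠ 1)
    (f : (Fin n → ℂ) → ℂ) (hf : Continuous f)
    (hinv : ∀ z, f (fun i => lam i * z i) = c * f z) :
    ∀ z, f z = 0 :=
  stmt_4_general n lam hlam c hc1 hc2 f hf hinv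
end

section
/- Let n ≥ 1 and let λ = (λ₁,…,λₙ) ∈ ℂⁿ satisfy |λᵢ| < 1 for every i. Then for every function f : ℂⁿ → ℂ that is analytic on all of ℂⁿ and satisfies f(0) = 0, there exists a function g : ℂⁿ → ℂ analytic on all of ℂⁿ with g(0) = 0 such that f(z) = g(z) − g(d_λ(z)) for all z ∈ ℂⁿ. -/
/-!
For a continuous linear `T` with `‖T‖ < 1` take `g z = ∑ₖ f (Tᵏ z)`; wherever the series
converges, `g z = f z + g (T z)`. Near `0` the function `f` is a power series `p` with `p₀ = 0`,
so the `m`-th coefficient of `f ∘ Tᵏ` has norm at most `‖T‖ᵏ ‖pₘ‖`. The double series therefore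
converges absolutely on a ball around `0`, where `g` is analytic with the summed power series.
Every orbit `Tᴺ z` enters this ball, and `g = f + g ∘ T` carries summability and analyticity back
from `Tᴺ z` to `z`. The diagonal map `d_λ` is multiplication by `λ` in the normed ring `ℂⁿ`, whose
sup norm is `max |λᵢ| < 1`.
-/

open scoped NNReal ENNReal
open Filter

section

variable {𝕜 E F : Type*} [NontriviallyNormedField 𝕜] [NormedAddCommGroup E] [NormedSpace 𝕜 E]
  [NormedAddCommGroup F]

section SeriesOfPowerSeries

variable [NormedSpace 𝕜 F] [CompleteSpace F]

variable {ι : Type*} {f : ι → E → F} {p : ι → FormalMultilinearSeries 𝕜 E F} {x : E} {r : ℝ≥0}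

lemma summable_apply_of_summable_norm_mul_pow
    (hs : Summable fun im : ι × ℕ => ‖p im.1 im.2‖ * (r : ℝ) ^ im.2) {y : E}
    (hy : y ∈ Metric.eball (0 : E) r) :
    Summable fun im : ι × ℕ => p im.1 im.2 (fun _ => y) := by
  have hyr : ‖y‖ ≤ r := by
    rw [mem_eball_zero_iff] at hy
    exact_mod_cast hy.le
  refine Summable.of_norm_bounded hs fun im => ?_
  simpa using (p im.1 im.2).le_opNorm_mul_prod_of_le fun _ => hyr

lemma hasSum_apply_add_of_hasFPowerSeriesOnBall
    (hf : ∀ i, HasFPowerSeriesOnBall (f i) (p i) x r)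
    (hs : Summable fun im : ι × ℕ => ‖p im.1 im.2‖ * (r : ℝ) ^ im.2) {y : E}
    (hy : y ∈ Metric.eball (0 : E) r) :
    HasSum (fun i => f i (x + y)) (∑' im : ι × ℕ, p im.1 im.2 (fun _ => y)) :=
  (summable_apply_of_summable_norm_mul_pow hs hy).hasSum.prod_fiberwise
    fun i => (hf i).hasSum hy

lemma hasFPowerSeriesOnBall_tsum (hr : 0 < r) (hf : ∀ i, HasFPowerSeriesOnBall (f i) (p i) x r)
    (hs : Summable fun im : ι × ℕ => ‖p im.1 im.2‖ * (r : ℝ) ^ im.2) :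
    HasFPowerSeriesOnBall (fun z => ∑' i, f i z) (fun m => ∑' i, p i m) x r := by
  have hsm : ∀ m, Summable fun i => ‖p i m‖ := fun m =>
    (summable_mul_right_iff (pow_ne_zero m (NNReal.coe_ne_zero.mpr hr.ne'))).mp
      (hs.prod_symm.prod_factor m)
  refine ⟨?_, by exact_mod_cast hr, fun {y} hy => ?_⟩
  · refine FormalMultilinearSeries.le_radius_of_summable _ <|
      hs.prod_symm.prod.of_nonneg_of_le (fun m => by positivity) fun m => ?_
    show _ ≤ ∑' i, ‖p i m‖ * (r : ℝ) ^ m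
    rw [tsum_mul_right]
    gcongr
    exact norm_tsum_le_tsum_norm (hsm m)
  · have hF := summable_apply_of_summable_norm_mul_pow hs hy
    rw [(hasSum_apply_add_of_hasFPowerSeriesOnBall hf hs hy).tsum_eq]
    refine ((Equiv.prodComm ℕ ι).hasSum_iff.mpr hF.hasSum).prod_fiberwise fun m => ?_
    have hpm : Summable fun i => p i m := (hsm m).of_norm
    rw [ContinuousMultilinearMap.tsum_eval hpm]
    exact (hF.prod_symm.prod_factor m).hasSum

end SeriesOfPowerSeries

section OrbitSum

lemma ContinuousLinearMap.norm_pow_apply_le (T : E →L[𝕜] E) (k : ℕ) (z : E) :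
    ‖(T ^ k) z‖ ≤ ‖T‖ ^ k * ‖z‖ := by
  induction k with
  | zero => simp
  | succ k ih =>
    calc ‖(T ^ (k + 1)) z‖ = ‖T ((T ^ k) z)‖ := by rw [pow_succ']; rfl
      _ ≤ ‖T‖ * (‖T‖ ^ k * ‖z‖) := T.le_opNorm_of_le ih
      _ = ‖T‖ ^ (k + 1) * ‖z‖ := by ring

lemma ContinuousLinearMap.opNorm_pow_le (T : E →L[𝕜] E) (k : ℕ) : ‖T ^ k‖ ≤ ‖T‖ ^ k :=
  (T ^ k).opNorm_le_bound (by positivity) (T.norm_pow_apply_le k)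

lemma ContinuousLinearMap.opNorm_pow_le_one {T : E →L[𝕜] E} (hT : ‖T‖ ≤ 1) (k : ℕ) :
    ‖T ^ k‖ ≤ 1 :=
  (T.opNorm_pow_le k).trans (pow_le_one₀ (norm_nonneg _) hT)

lemma ContinuousLinearMap.pow_succ_apply (T : E →L[𝕜] E) (k : ℕ) (z : E) :
    (T ^ (k + 1)) z = (T ^ k) (T z) := by
  rw [pow_succ]; rfl

noncomputable def orbitSum (T : E →L[𝕜] E) (f : E → F) (z : E) : F :=
  ∑' k : ℕ, f ((T ^ k) z)

variable {T : E →L[𝕜] E} {f : E → F}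

lemma orbitSum_apply_zero (hf0 : f 0 = 0) : orbitSum T f 0 = 0 := by
  simp [orbitSum, hf0]

lemma summable_orbit_apply_iff {z : E} :
    Summable (fun k => f ((T ^ k) (T z))) ↔ Summable (fun k => f ((T ^ k) z)) := by
  simp_rw [← T.pow_succ_apply]
  exact summable_nat_add_iff (f := fun k => f ((T ^ k) z)) 1

lemma orbitSum_eq_add_orbitSum_apply {z : E} (h : Summable fun k => f ((T ^ k) z)) :
    orbitSum T f z = f z + orbitSum T f (T z) := by
  simp_rw [orbitSum, h.tsum_eq_zero_add, T.pow_succ_apply, pow_zero]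
  rfl

lemma summable_orbit_of_pow_apply {z : E} (N : ℕ)
    (h : Summable fun k => f ((T ^ k) ((T ^ N) z))) : Summable fun k => f ((T ^ k) z) := by
  induction N generalizing z with
  | zero => simpa using h
  | succ N ih =>
    rw [T.pow_succ_apply] at h
    exact summable_orbit_apply_iff.mp (ih h)

lemma exists_pow_apply_mem_eball (hT : ‖T‖ < 1) (z : E) {r : ℝ≥0∞} (hr : 0 < r) :
    ∃ N, (T ^ N) z ∈ Metric.eball (0 : E) r := by
  have hlim : Tendsto (fun N => ‖T‖ ^ N * ‖z‖) atTop (nhds 0) := by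
    simpa using (tendsto_pow_atTop_nhds_zero_of_lt_one (norm_nonneg _) hT).mul_const ‖z‖
  obtain ⟨ε, hε, hεr⟩ := ENNReal.lt_iff_exists_nnreal_btwn.mp hr
  obtain ⟨N, hN⟩ :=
    (hlim.eventually (gt_mem_nhds (show (0 : ℝ) < ε by exact_mod_cast hε))).exists
  refine ⟨N, Metric.eball_subset_eball hεr.le ?_⟩
  rw [mem_eball_zero_iff]
  exact_mod_cast (T.norm_pow_apply_le N z).trans_lt hN

variable [NormedSpace 𝕜 F]

lemma analyticAt_orbitSum_of_pow_apply (hf : ∀ z, AnalyticAt 𝕜 f z)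
    (hs : ∀ z, Summable fun k => f ((T ^ k) z)) {z : E} (N : ℕ)
    (h : AnalyticAt 𝕜 (orbitSum T f) ((T ^ N) z)) : AnalyticAt 𝕜 (orbitSum T f) z := by
  induction N generalizing z with
  | zero => simpa using h
  | succ N ih =>
    rw [T.pow_succ_apply] at h
    have hsplit : orbitSum T f = fun w => f w + orbitSum T f (T w) :=
      funext fun w => orbitSum_eq_add_orbitSum_apply (hs w)
    rw [hsplit]
    exact (hf z).add ((ih h).comp (T.analyticAt z))

lemma FormalMultilinearSeries.norm_compContinuousLinearMap_pow_le
    (p : FormalMultilinearSeries 𝕜 E F) (hp0 : p 0 = 0) {T : E →L[𝕜] E} (hT : ‖T‖ ≤ 1)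
    (k m : ℕ) : ‖p.compContinuousLinearMap (T ^ k) m‖ ≤ ‖T‖ ^ k * ‖p m‖ := by
  calc ‖p.compContinuousLinearMap (T ^ k) m‖ ≤ ‖p m‖ * ∏ _ : Fin m, ‖T ^ k‖ :=
        (p m).norm_compContinuousLinearMap_le fun _ => T ^ k
    _ ≤ ‖T‖ ^ k * ‖p m‖ := by
        rcases m.eq_zero_or_pos with rfl | hm
        · simp [hp0]
        rw [Finset.prod_const, Finset.card_univ, Fintype.card_fin, mul_comm]
        gcongr
        calc ‖T ^ k‖ ^ m ≤ ‖T ^ k‖ :=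
              pow_le_of_le_one (norm_nonneg _) (T.opNorm_pow_le_one hT k) hm.ne'
          _ ≤ ‖T‖ ^ k := T.opNorm_pow_le k

lemma HasFPowerSeriesOnBall.comp_of_norm_le_one {p : FormalMultilinearSeries 𝕜 E F} {r : ℝ≥0∞} (hf : HasFPowerSeriesOnBall f p 0 r) {u : E →L[𝕜] E} (hu : ‖u‖ ≤ 1) :
    HasFPowerSeriesOnBall (f ∘ u) (p.compContinuousLinearMap u) 0 r := by
  rw [← map_zero u] at hf
  refine hf.compContinuousLinearMap.mono hf.r_pos ?_
  calc r = r / 1 := (div_one r).symm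
    _ ≤ r / ‖u‖ₑ := ENNReal.div_le_div_left (by rw [enorm_eq_nnnorm]; exact_mod_cast hu) r

variable {p : FormalMultilinearSeries 𝕜 E F} {r : ℝ≥0}

lemma summable_norm_compContinuousLinearMap_pow_mul_pow (hT : ‖T‖ < 1) (hp0 : p 0 = 0)
    (hr : (r : ℝ≥0∞) < p.radius) :
    Summable fun km : ℕ × ℕ => ‖p.compContinuousLinearMap (T ^ km.1) km.2‖ * (r : ℝ) ^ km.2 := by
  refine ((summable_geometric_of_lt_one (norm_nonneg T) hT).mul_of_nonneg
    (p.summable_norm_mul_pow hr) (fun _ => by positivity) (fun _ => by positivity)).of_nonneg_of_le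
    (fun _ => by positivity) fun ⟨k, m⟩ => ?_
  rw [← mul_assoc]
  gcongr
  exact p.norm_compContinuousLinearMap_pow_le hp0 hT.le k m

variable [CompleteSpace F]

lemma summable_orbit_of_mem_eball (hT : ‖T‖ < 1) (hf : HasFPowerSeriesOnBall f p 0 r)
    (hp0 : p 0 = 0) (hr : (r : ℝ≥0∞) < p.radius) {z : E} (hz : z ∈ Metric.eball (0 : E) r) :
    Summable fun k => f ((T ^ k) z) := by
  simpa using (hasSum_apply_add_of_hasFPowerSeriesOnBall
    (fun k => hf.comp_of_norm_le_one (ContinuousLinearMap.opNorm_pow_le_one hT.le k))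
    (summable_norm_compContinuousLinearMap_pow_mul_pow hT hp0 hr) hz).summable

lemma hasFPowerSeriesOnBall_orbitSum (hT : ‖T‖ < 1) (hf : HasFPowerSeriesOnBall f p 0 r)
    (hp0 : p 0 = 0) (hr : (r : ℝ≥0∞) < p.radius) :
    HasFPowerSeriesOnBall (orbitSum T f)
      (fun m => ∑' k, p.compContinuousLinearMap (T ^ k) m) 0 r :=
  hasFPowerSeriesOnBall_tsum (by exact_mod_cast hf.r_pos)
    (fun k => hf.comp_of_norm_le_one (ContinuousLinearMap.opNorm_pow_le_one hT.le k))
    (summable_norm_compContinuousLinearMap_pow_mul_pow hT hp0 hr)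

theorem summable_orbit_and_analyticAt_orbitSum (hT : ‖T‖ < 1) (hf : ∀ z, AnalyticAt 𝕜 f z)
    (hf0 : f 0 = 0) (z : E) :
    Summable (fun k => f ((T ^ k) z)) ∧ AnalyticAt 𝕜 (orbitSum T f) z := by
  obtain ⟨p, R, hp⟩ := hf 0
  obtain ⟨r, hr0, hrR⟩ := ENNReal.lt_iff_exists_nnreal_btwn.mp hp.r_pos
  have hpr : HasFPowerSeriesOnBall f p 0 r := hp.mono hr0 hrR.le
  have hrp : (r : ℝ≥0∞) < p.radius := hrR.trans_le hp.r_le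
  have hp0 : p 0 = 0 := by
    ext v
    simp [hp.coeff_zero v, hf0]
  have hs : ∀ w, Summable fun k => f ((T ^ k) w) := fun w =>
    let ⟨N, hN⟩ := exists_pow_apply_mem_eball hT w hr0
    summable_orbit_of_pow_apply N (summable_orbit_of_mem_eball hT hpr hp0 hrp hN)
  obtain ⟨N, hN⟩ := exists_pow_apply_mem_eball hT z hr0
  exact ⟨hs z, analyticAt_orbitSum_of_pow_apply hf hs N
    ((hasFPowerSeriesOnBall_orbitSum hT hpr hp0 hrp).analyticAt_of_mem hN)⟩

end OrbitSum

end

theorem stmt_5_general (n : ℕ) (lam : Fin n → ℂ)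
    (hlam : ∀ i, ‖lam i‖ < 1)
    (f : (Fin n → ℂ) → ℂ) (hf : ∀ z, AnalyticAt ℂ f z) (hf0 : f 0 = 0) :
    ∃ g : (Fin n → ℂ) → ℂ, (∀ z, AnalyticAt ℂ g z) ∧ g 0 = 0 ∧
      ∀ z, f z = g z - g (fun i => lam i * z i) := by
  set T := ContinuousLinearMap.mul ℂ (Fin n → ℂ) lam
  have hT : ‖T‖ < 1 :=
    (ContinuousLinearMap.opNorm_mul_apply_le ℂ _ lam).trans_lt ((pi_norm_lt_iff one_pos).2 hlam)
  have hg := summable_orbit_and_analyticAt_orbitSum hT hf hf0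
  refine ⟨orbitSum T f, fun z => (hg z).2, orbitSum_apply_zero hf0, fun z => ?_⟩
  rw [orbitSum_eq_add_orbitSum_apply (hg z).1]
  exact (add_sub_cancel_right (f z) (orbitSum T f (T z))).symm

/-- For entire `f : ℂⁿ → ℂ` with `f 0 = 0` and `|λ_i| < 1` for all `i`, the equation
`f = g − g ∘ d_λ` is solvable with `g` entire and `g 0 = 0`. -/
theorem stmt_5 (n : ℕ) (hn : 1 ≤ n) (lam : Fin n → ℂ)
    (hlam : ∀ i, ‖lam i‖ < 1)
    (f : (Fin n → ℂ) → ℂ) (hf : ∀ z, AnalyticAt ℂ f z) (hf0 : f 0 = 0) :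
    ∃ g : (Fin n → ℂ) → ℂ, (∀ z, AnalyticAt ℂ g z) ∧ g 0 = 0 ∧
      ∀ z, f z = g z - g (fun i => lam i * z i) :=
  stmt_5_general n lam hlam f hf hf0
end

section
/- Let n ≥ 1 and let λ = (λ₁,…,λₙ) ∈ ℂⁿ with λᵢ ≠ 0 for every i. Let g and h be nonzero formal power series in n variables over ℂ, and let g_λ (resp. h_λ) denote the formal power series whose coefficient at each multi-index m ∈ ℕⁿ is λ^m times the coefficient of g (resp. h) at m. If g_λ · h = h_λ · g as formal power series, then there exist multi-indices m₀ in the support of g and l₀ in the support of h such that λ^{m₀} = λ^{l₀}. -/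
/-!
Order the exponents lexicographically and let `p`, `q` be the least exponents in the supports of
`g` and `h`. The coefficients of `g_λ` vanish wherever those of `g` do, so no exponent below `p`
occurs in `g_λ` either, and the coefficient of `g_λ h` at `p + q` is `λ^p g_p h_q`; likewise that
of `h_λ g` is `λ^q h_q g_p`. Comparing them and cancelling `g_p h_q ≠ 0` gives `λ^p = λ^q`.
-/

namespace MvPowerSeries

variable {σ R : Type*} [LinearOrder σ] [WellFoundedGT σ] [Semiring R]

theorem lexOrder_le_of_coeff_eq_mul {φ ψ : MvPowerSeries σ R}
    (c : (σ →₀ ℕ) → R) (h : ∀ m, coeff m ψ = c m * coeff m φ) :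
    lexOrder φ ≤ lexOrder ψ :=
  le_lexOrder_iff.mpr fun d hd => by rw [h, coeff_eq_zero_of_lt_lexOrder hd, mul_zero]

theorem coeff_add_mul_of_le_lexOrder {φ ψ : MvPowerSeries σ R} {p q : σ →₀ ℕ}
    (hp : toLex p ≤ lexOrder φ) (hq : toLex q ≤ lexOrder ψ) :
    coeff (p + q) (φ * ψ) = coeff p φ * coeff q ψ := by
  rcases hp.eq_or_lt with hp | hp
  · rcases hq.eq_or_lt with hq | hq
    · exact coeff_mul_of_add_lexOrder hp.symm hq.symm
    · have hlt : toLex (p + q) < lexOrder φ + lexOrder ψ := by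
        rw [toLex_add, WithTop.coe_add]
        exact WithTop.add_lt_add_of_le_of_lt WithTop.coe_ne_top hp.le hq
      rw [coeff_eq_zero_of_lt_lexOrder (hlt.trans_le (le_lexOrder_mul φ ψ)),
        coeff_eq_zero_of_lt_lexOrder hq, mul_zero]
  · have hlt : toLex (p + q) < lexOrder φ + lexOrder ψ := by
      rw [toLex_add, WithTop.coe_add]
      exact WithTop.add_lt_add_of_lt_of_le WithTop.coe_ne_top hp hq
    rw [coeff_eq_zero_of_lt_lexOrder (hlt.trans_le (le_lexOrder_mul φ ψ)),
      coeff_eq_zero_of_lt_lexOrder hp, zero_mul]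

end MvPowerSeries

theorem stmt_7_general (n : ℕ) (lam : Fin n → ℂ)
    (g h gl hl : MvPowerSeries (Fin n) ℂ) (hg : g ≠ 0) (hh : h ≠ 0)
    (hgl : ∀ m : Fin n →₀ ℕ,
      MvPowerSeries.coeff m gl = (∏ i, lam i ^ m i) * MvPowerSeries.coeff m g)
    (hhl : ∀ m : Fin n →₀ ℕ,
      MvPowerSeries.coeff m hl = (∏ i, lam i ^ m i) * MvPowerSeries.coeff m h)
    (heq : gl * h = hl * g) :
    ∃ m₀ l₀ : Fin n →₀ ℕ,
      MvPowerSeries.coeff m₀ g ≠ 0 ∧ MvPowerSeries.coeff l₀ h ≠ 0 ∧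
      (∏ i, lam i ^ m₀ i) = ∏ i, lam i ^ l₀ i := by
  obtain ⟨p, hp⟩ := MvPowerSeries.exists_finsupp_eq_lexOrder_of_ne_zero hg
  obtain ⟨q, hq⟩ := MvPowerSeries.exists_finsupp_eq_lexOrder_of_ne_zero hh
  have hgp := MvPowerSeries.coeff_ne_zero_of_lexOrder hp.symm
  have hhq := MvPowerSeries.coeff_ne_zero_of_lexOrder hq.symm
  have hpl : toLex p ≤ gl.lexOrder := hp ▸ MvPowerSeries.lexOrder_le_of_coeff_eq_mul _ hgl
  have hql : toLex q ≤ hl.lexOrder := hq ▸ MvPowerSeries.lexOrder_le_of_coeff_eq_mul _ hhl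
  have hcoeff := congrArg (MvPowerSeries.coeff (p + q)) heq
  rw [MvPowerSeries.coeff_add_mul_of_le_lexOrder hpl hq.ge, add_comm p q,
    MvPowerSeries.coeff_add_mul_of_le_lexOrder hql hp.ge, hgl, hhl] at hcoeff
  refine ⟨p, q, hgp, hhq, mul_right_cancel₀ (mul_ne_zero hgp hhq) ?_⟩
  linear_combination hcoeff

/-- If `g, h` are nonzero formal power series with `g_λ h = h_λ g`, where `g_λ` has
coefficients `λ^m · g_m`, then some `m₀` in the support of `g` and `l₀` in the support
of `h` satisfy `λ^{m₀} = λ^{l₀}`. -/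
theorem stmt_7 (n : ℕ) (hn : 1 ≤ n) (lam : Fin n → ℂ) (hlam : ∀ i, lam i ≠ 0)
    (g h gl hl : MvPowerSeries (Fin n) ℂ) (hg : g ≠ 0) (hh : h ≠ 0)
    (hgl : ∀ m : Fin n →₀ ℕ,
      MvPowerSeries.coeff m gl = (∏ i, lam i ^ m i) * MvPowerSeries.coeff m g)
    (hhl : ∀ m : Fin n →₀ ℕ,
      MvPowerSeries.coeff m hl = (∏ i, lam i ^ m i) * MvPowerSeries.coeff m h)
    (heq : gl * h = hl * g) :
    ∃ m₀ l₀ : Fin n →₀ ℕ,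
      MvPowerSeries.coeff m₀ g ≠ 0 ∧ MvPowerSeries.coeff l₀ h ≠ 0 ∧
      (∏ i, lam i ^ m₀ i) = ∏ i, lam i ^ l₀ i :=
  stmt_7_general n lam g h gl hl hg hh hgl hhl heq
end

section
/- Let n ≥ 1 and let λ = (λ₁,…,λₙ) ∈ ℂⁿ with λᵢ ≠ 0 for all i, and suppose λ is non-resonant in degrees ≥ 2, i.e. for every s ∈ {1,…,n} and every m ∈ ℕⁿ with m₁ + ⋯ + mₙ ≥ 2 one has λ^m ≠ λ_s. Let γ = (γ₁,…,γₙ) be an n-tuple of formal power series in n variables over ℂ such that each γ_i has zero constant term and linear part λ_i z_i (i.e. the coefficient of z_j in γ_i is λ_i if j = i and 0 otherwise). Then there exists an n-tuple h = (h₁,…,hₙ) of formal power series with zero constant terms and linear part the identity (the coefficient of z_j in h_i is δ_{ij}) such that h ∘ γ = d_λ ∘ h as formal power series, i.e. for each i, substituting γ₁,…,γₙ into h_i yields λ_i·h_i. -/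
/-- Substitution of an `n`-tuple `γ` of multivariate formal power series (each with
zero constant term) into a multivariate formal power series `h`, i.e. `h ∘ γ`.
The coefficient of `h ∘ γ` at a multi-index `e` is
`∑_m (coeff m h) · coeff e (γ^m)`; when each `γ i` has zero constant term, only the
multi-indices `m` with `|m| ≤ |e|` (in particular `m i ≤ |e|` for each `i`)
contribute, so the sum below computes it. -/
noncomputable def psComp (n : ℕ) (γ : Fin n → MvPowerSeries (Fin n) ℂ)
    (h : MvPowerSeries (Fin n) ℂ) : MvPowerSeries (Fin n) ℂ :=
  fun e =>
    ∑ m ∈ Finset.Iic (Finsupp.equivFunOnFinite.symm fun _ => e.sum fun _ k => k),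
      MvPowerSeries.coeff m h * MvPowerSeries.coeff e (∏ i, γ i ^ m i)

/-!
Since `γⱼ = λⱼ zⱼ + O(|z|²)`, the lowest homogeneous part of `γ^m = ∏ γⱼ^{mⱼ}` is `λ^m z^m`.
Hence the coefficient of `z^e` in `hᵢ ∘ γ` is `λ^e hᵢ,ₑ` plus a linear combination of the
coefficients `hᵢ,ₘ` with `|m| < |e|`. Equating it with `λᵢ hᵢ,ₑ` determines `hᵢ,ₑ` by
recursion on `|e|`, starting from the identity in degree `1`: non-resonance says precisely
that the divisor `λᵢ - λ^e` does not vanish when `|e| ≥ 2`.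
-/

namespace MvPowerSeries

variable {σ R : Type*} [CommSemiring R]

theorem homogeneousComponent_zero_one :
    homogeneousComponent 0 (1 : MvPowerSeries σ R) = 1 := by
  classical
  ext d
  simp only [coeff_homogeneousComponent, coeff_one, Finsupp.degree_eq_zero_iff]
  split_ifs <;> rfl

theorem homogeneousComponent_prod_of_le_order {ι : Type*} (s : Finset ι)
    {f : ι → MvPowerSeries σ R} {p : ι → ℕ} (hf : ∀ i ∈ s, p i ≤ (f i).order) :
    homogeneousComponent (∑ i ∈ s, p i) (∏ i ∈ s, f i)
      = ∏ i ∈ s, homogeneousComponent (p i) (f i) := by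
  induction s using Finset.cons_induction with
  | empty => exact homogeneousComponent_zero_one
  | cons a s ha ih =>
    have hs : ((∑ i ∈ s, p i : ℕ) : ℕ∞) ≤ (∏ i ∈ s, f i).order := by
      push_cast
      exact (Finset.sum_le_sum fun i hi => hf i (Finset.mem_cons_of_mem hi)).trans
        (le_order_prod f s)
    rw [Finset.sum_cons, Finset.prod_cons, Finset.prod_cons,
      homogeneousComponent_mul_of_le_order (hf a (Finset.mem_cons_self a s)) hs,
      ih fun i hi => hf i (Finset.mem_cons_of_mem hi)]

theorem homogeneousComponent_pow_of_le_order {f : MvPowerSeries σ R} {p : ℕ}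
    (hf : p ≤ f.order) (k : ℕ) :
    homogeneousComponent (k * p) (f ^ k) = homogeneousComponent p f ^ k := by
  simpa using homogeneousComponent_prod_of_le_order (Finset.range k)
    (f := fun _ => f) (p := fun _ => p) fun _ _ => hf

end MvPowerSeries

open MvPowerSeries Finsupp

section DiagonalLinearPart

variable {σ K : Type*}

structure HasDiagonalLinearPart [CommSemiring K] (lam : σ → K) (γ : σ → MvPowerSeries σ K) :
    Prop where
  constantCoeff_eq_zero : ∀ i, constantCoeff (γ i) = 0
  homogeneousComponent_one : ∀ i, homogeneousComponent 1 (γ i) = monomial (single i 1) (lam i)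

theorem HasDiagonalLinearPart.of_coeff [DecidableEq σ] [CommSemiring K] {lam : σ → K}
    {γ : σ → MvPowerSeries σ K} (h0 : ∀ i, constantCoeff (γ i) = 0)
    (h1 : ∀ i j, coeff (single j 1) (γ i) = if j = i then lam i else 0) :
    HasDiagonalLinearPart lam γ := by
  refine ⟨h0, fun i => ?_⟩
  ext d
  rw [coeff_homogeneousComponent, coeff_monomial]
  split_ifs with hd hdi hdi
  · rw [hdi, h1, if_pos rfl]
  · obtain ⟨j, rfl⟩ := (sum_eq_one_iff d).mp hd
    rw [h1, if_neg]
    rintro rfl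
    exact hdi rfl
  · exact absurd (hdi ▸ degree_single i 1) hd
  · rfl

namespace HasDiagonalLinearPart

variable [Fintype σ] [CommSemiring K] {lam : σ → K} {γ : σ → MvPowerSeries σ K}

theorem le_order_prod_pow (hγ : HasDiagonalLinearPart lam γ) (m : σ →₀ ℕ) :
    ((degree m : ℕ) : ℕ∞) ≤ (∏ j, γ j ^ m j).order := by
  rw [degree_eq_sum]
  push_cast
  exact (Finset.sum_le_sum fun j _ =>
    le_order_pow_of_constantCoeff_eq_zero _ (hγ.constantCoeff_eq_zero j)).trans
    (le_order_prod _ _)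

theorem homogeneousComponent_prod_pow (hγ : HasDiagonalLinearPart lam γ) (m : σ →₀ ℕ) :
    homogeneousComponent (degree m) (∏ j, γ j ^ m j) = monomial m (∏ j, lam j ^ m j) := by
  have hpow (j : σ) : homogeneousComponent (m j) (γ j ^ m j)
      = monomial (single j (m j)) (lam j ^ m j) := by
    simpa [hγ.homogeneousComponent_one, monomial_pow] using
      homogeneousComponent_pow_of_le_order
        ((one_le_order_iff_constCoeff_eq_zero).mpr (hγ.constantCoeff_eq_zero j)) (m j)
  rw [degree_eq_sum, homogeneousComponent_prod_of_le_order _ fun j _ =>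
      le_order_pow_of_constantCoeff_eq_zero _ (hγ.constantCoeff_eq_zero j)]
  simp only [hpow, prod_monomial, univ_sum_single]

variable [DecidableEq σ]

theorem coeff_prod_pow_of_degree_le (hγ : HasDiagonalLinearPart lam γ) {e m : σ →₀ ℕ}
    (he : degree e ≤ degree m) :
    coeff e (∏ j, γ j ^ m j) = if e = m then ∏ j, lam j ^ m j else 0 := by
  rcases he.lt_or_eq with hlt | heq
  · rw [coeff_of_lt_order ((Nat.cast_lt.mpr hlt).trans_le (hγ.le_order_prod_pow m)),
      if_neg (by rintro rfl; exact lt_irrefl _ hlt)]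
  · have h := congrArg (coeff e) (hγ.homogeneousComponent_prod_pow m)
    rw [coeff_homogeneousComponent, if_pos heq, coeff_monomial] at h
    rw [h]

theorem sum_Iic_mul_coeff_prod_pow (hγ : HasDiagonalLinearPart lam γ) (c : (σ →₀ ℕ) → K)
    (e : σ →₀ ℕ) :
    ∑ m ∈ Finset.Iic (equivFunOnFinite.symm fun _ => degree e), c m * coeff e (∏ j, γ j ^ m j)
      = ∑ m ∈ (Finset.Iic (equivFunOnFinite.symm fun _ => degree e)).filter
            (degree · < degree e), c m * coeff e (∏ j, γ j ^ m j)
        + c e * ∏ j, lam j ^ e j := by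
  rw [← Finset.sum_filter_add_sum_filter_not _ (degree · < degree e)]
  congr 1
  have he : e ∈ (Finset.Iic (equivFunOnFinite.symm fun _ => degree e)).filter
      (¬ degree · < degree e) :=
    Finset.mem_filter.mpr ⟨Finset.mem_Iic.mpr fun j => le_degree j e, lt_irrefl _⟩
  rw [Finset.sum_congr rfl fun m hm => by
      rw [hγ.coeff_prod_pow_of_degree_le (not_lt.mp (Finset.mem_filter.mp hm).2), mul_ite,
        mul_zero],
    Finset.sum_ite_eq, if_pos he]

end HasDiagonalLinearPart

theorem sum_filter_degree_lt_mul_coeff_prod_pow_of_degree_le_one [Fintype σ] [DecidableEq σ]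
    [CommSemiring K] (γ : σ → MvPowerSeries σ K) (c : (σ →₀ ℕ) → K) {e : σ →₀ ℕ}
    (he : degree e ≤ 1) :
    ∑ m ∈ (Finset.Iic (equivFunOnFinite.symm fun _ => degree e)).filter
        (degree · < degree e), c m * coeff e (∏ j, γ j ^ m j) = 0 := by
  refine Finset.sum_eq_zero fun m hm => ?_
  have hm : degree m < degree e := (Finset.mem_filter.mp hm).2
  obtain rfl : m = 0 := (degree_eq_zero_iff m).mp (by omega)
  have he0 : e ≠ 0 := fun h => by simp [h] at hm
  simp [coeff_one, he0]

end DiagonalLinearPart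

section Linearization

variable {σ K : Type*} [Fintype σ] [DecidableEq σ] [Field K]

noncomputable def linearizingCoeff (lam : σ → K) (γ : σ → MvPowerSeries σ K) (i : σ)
    (e : σ →₀ ℕ) : K :=
  if degree e ≤ 1 then if e = single i 1 then 1 else 0
  else (lam i - ∏ j, lam j ^ e j)⁻¹ *
    ∑ m ∈ ((Finset.Iic (equivFunOnFinite.symm fun _ => degree e)).filter
        (degree · < degree e)).attach,
      linearizingCoeff lam γ i m * coeff e (∏ j, γ j ^ m.1 j)
termination_by degree e
decreasing_by exact (Finset.mem_filter.mp m.2).2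

noncomputable def linearization (lam : σ → K) (γ : σ → MvPowerSeries σ K) (i : σ) :
    MvPowerSeries σ K :=
  linearizingCoeff lam γ i

variable (lam : σ → K) (γ : σ → MvPowerSeries σ K) (i : σ)

theorem coeff_linearization (e : σ →₀ ℕ) :
    coeff e (linearization lam γ i) = linearizingCoeff lam γ i e :=
  rfl

theorem linearizingCoeff_of_degree_le_one {e : σ →₀ ℕ} (he : degree e ≤ 1) :
    linearizingCoeff lam γ i e = if e = single i 1 then 1 else 0 := by
  rw [linearizingCoeff, if_pos he]

theorem linearizingCoeff_of_one_lt_degree {e : σ →₀ ℕ} (he : 1 < degree e) :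
    linearizingCoeff lam γ i e = (lam i - ∏ j, lam j ^ e j)⁻¹ *
      ∑ m ∈ (Finset.Iic (equivFunOnFinite.symm fun _ => degree e)).filter
          (degree · < degree e),
        linearizingCoeff lam γ i m * coeff e (∏ j, γ j ^ m j) := by
  rw [linearizingCoeff, if_neg he.not_ge,
    Finset.sum_attach _ fun m => linearizingCoeff lam γ i m * coeff e (∏ j, γ j ^ m j)]

theorem constantCoeff_linearization : constantCoeff (linearization lam γ i) = 0 := by
  rw [← coeff_zero_eq_constantCoeff_apply, coeff_linearization,
    linearizingCoeff_of_degree_le_one _ _ _ (by simp),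
    if_neg (single_ne_zero.mpr one_ne_zero).symm]

theorem coeff_single_linearization (j : σ) :
    coeff (single j 1) (linearization lam γ i) = if i = j then 1 else 0 := by
  rw [coeff_linearization, linearizingCoeff_of_degree_le_one _ _ _ (degree_single j 1).le]
  exact if_congr ((single_left_inj one_ne_zero).trans eq_comm) rfl rfl

variable {lam γ i}

theorem HasDiagonalLinearPart.sum_coeff_linearization_mul_coeff_prod_pow
    (hγ : HasDiagonalLinearPart lam γ)
    (hres : ∀ m : σ →₀ ℕ, 2 ≤ degree m → ∏ j, lam j ^ m j ≠ lam i) (e : σ →₀ ℕ) :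
    ∑ m ∈ Finset.Iic (equivFunOnFinite.symm fun _ => degree e),
        coeff m (linearization lam γ i) * coeff e (∏ j, γ j ^ m j)
      = lam i * coeff e (linearization lam γ i) := by
  simp only [coeff_linearization]
  rw [hγ.sum_Iic_mul_coeff_prod_pow]
  rcases le_or_gt (degree e) 1 with he | he
  · rw [sum_filter_degree_lt_mul_coeff_prod_pow_of_degree_le_one γ _ he, zero_add,
      linearizingCoeff_of_degree_le_one _ _ _ he]
    split_ifs with hei
    · simp [hei, single_apply]
    · simp
  · have hne : lam i - ∏ j, lam j ^ e j ≠ 0 := sub_ne_zero.mpr (hres e he).symm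
    rw [linearizingCoeff_of_one_lt_degree _ _ _ he]
    field_simp
    ring

end Linearization

theorem stmt_16_general (n : ℕ) (lam : Fin n → ℂ)
    (hres : ∀ (s : Fin n) (m : Fin n → ℕ), 2 ≤ ∑ i, m i → (∏ i, lam i ^ m i) ≠ lam s)
    (γ : Fin n → MvPowerSeries (Fin n) ℂ)
    (hγ0 : ∀ i, MvPowerSeries.constantCoeff (γ i) = 0)
    (hγ1 : ∀ i j, MvPowerSeries.coeff (Finsupp.single j 1) (γ i)
        = if j = i then lam i else 0) :
    ∃ h : Fin n → MvPowerSeries (Fin n) ℂ,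
      (∀ i, MvPowerSeries.constantCoeff (h i) = 0) ∧
      (∀ i j, MvPowerSeries.coeff (Finsupp.single j 1) (h i)
          = if i = j then 1 else 0) ∧
      (∀ i, psComp n γ (h i) = lam i • h i) := by
  have hγ : HasDiagonalLinearPart lam γ := .of_coeff hγ0 hγ1
  refine ⟨linearization lam γ, constantCoeff_linearization lam γ,
    coeff_single_linearization lam γ, fun i => ?_⟩
  ext e
  rw [coeff_smul]
  exact hγ.sum_coeff_linearization_mul_coeff_prod_pow
    (fun m hm => hres i m (degree_eq_sum m ▸ hm)) e

/-- Formal Poincaré–Dulac linearization: if `λ ∈ (ℂ*)ⁿ` has no resonances in degrees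
`≥ 2`, then any tuple `γ` of formal power series with zero constant term and diagonal
linear part `d_λ` is formally conjugate to `d_λ`: there is a tuple `h` of formal power
series with zero constant term and identity linear part with `h ∘ γ = d_λ ∘ h`. -/
theorem stmt_16 (n : ℕ) (hn : 1 ≤ n) (lam : Fin n → ℂ) (hlam : ∀ i, lam i ≠ 0)
    (hres : ∀ (s : Fin n) (m : Fin n → ℕ), 2 ≤ ∑ i, m i → (∏ i, lam i ^ m i) ≠ lam s)
    (γ : Fin n → MvPowerSeries (Fin n) ℂ)
    (hγ0 : ∀ i, MvPowerSeries.constantCoeff (γ i) = 0)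
    (hγ1 : ∀ i j, MvPowerSeries.coeff (Finsupp.single j 1) (γ i)
        = if j = i then lam i else 0) :
    ∃ h : Fin n → MvPowerSeries (Fin n) ℂ,
      (∀ i, MvPowerSeries.constantCoeff (h i) = 0) ∧
      (∀ i j, MvPowerSeries.coeff (Finsupp.single j 1) (h i)
          = if i = j then 1 else 0) ∧
      (∀ i, psComp n γ (h i) = lam i • h i) :=
  stmt_16_general n lam hres γ hγ0 hγ1
end
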